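/- arXiv:hep-th/9612007 — 5 statements merged into one kernel-verified Lean document; each statement's English description precedes it below -/
import Mathlib

section
/- Let γ be an automorphism of a unital *-algebra C satisfying γ* = γ⁻¹, and let ω be a γ-invariant state on C such that for every A ∈ C the sequence n ↦ ω(A* γⁿ(A)) is bounded. Then |ω(A* γ(A))| ≤ ω(A* A) for all A ∈ C. -/
/-!
Write `⟪x, y⟫ = ω (x⋆ y)`. Invariance of `ω` together with `γ⋆ = γ⁻¹` makes `γ` symmetric for
this form, `⟪γⁿ a, x⟫ = ⟪a, γⁿ x⟫`, so `F n = ⟪a, γⁿ a⟫` satisfies `⟪γⁿ a, γⁿ a⟫ = F (2n)` and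
Cauchy–Schwarz reads `|F n|² ≤ F 0 · F (2n)`. Iterating, `(|F 1| / F 0) ^ 2ᵏ ≤ F (2ᵏ) / F 0`,
which stays bounded in `k` only if `|F 1| ≤ F 0`.
-/

open scoped ComplexOrder

section DoublingInequality

variable {g : ℕ → ℝ}

theorem pow_two_pow_le_of_sq_le (hg : ∀ n, 0 ≤ g n) (hsq : ∀ n, g n ^ 2 ≤ g (2 * n)) (n k : ℕ) :
    g n ^ 2 ^ k ≤ g (2 ^ k * n) := by
  induction k with
  | zero => simp
  | succ k ih =>
    calc g n ^ 2 ^ (k + 1) = (g n ^ 2 ^ k) ^ 2 := by rw [pow_succ, pow_mul]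
      _ ≤ g (2 ^ k * n) ^ 2 := pow_le_pow_left₀ (pow_nonneg (hg n) _) ih 2
      _ ≤ g (2 * (2 ^ k * n)) := hsq _
      _ = g (2 ^ (k + 1) * n) := by rw [pow_succ', mul_assoc]

theorem le_one_of_sq_le_of_le (hg : ∀ n, 0 ≤ g n) (hsq : ∀ n, g n ^ 2 ≤ g (2 * n)) {K : ℝ}
    (hK : ∀ n, g n ≤ K) (n : ℕ) : g n ≤ 1 := by
  by_contra! h
  obtain ⟨k, hk⟩ := pow_unbounded_of_one_lt K h
  have : g n ^ k ≤ g n ^ 2 ^ k := pow_le_pow_right₀ h.le Nat.lt_two_pow_self.le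
  linarith [pow_two_pow_le_of_sq_le hg hsq n k, hK (2 ^ k * n)]

theorem le_apply_zero_of_sq_le_mul (hg : ∀ n, 0 ≤ g n) (hsq : ∀ n, g n ^ 2 ≤ g 0 * g (2 * n))
    {K : ℝ} (hK : ∀ n, g n ≤ K) (n : ℕ) : g n ≤ g 0 := by
  rcases (hg 0).eq_or_lt with h0 | h0
  · have : g n ^ 2 ≤ 0 := by simpa [← h0] using hsq n
    rw [← h0]
    exact (pow_eq_zero_iff two_ne_zero |>.mp (le_antisymm this (sq_nonneg _))).le
  · have hsq' (m : ℕ) : (g m / g 0) ^ 2 ≤ g (2 * m) / g 0 := by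
      rw [div_pow, div_le_div_iff₀ (by positivity) h0]
      nlinarith [hsq m]
    have := le_one_of_sq_le_of_le (g := fun m => g m / g 0) (fun m => div_nonneg (hg m) h0.le)
      hsq' (fun m => div_le_div_of_nonneg_right (hK m) h0.le) n
    rwa [div_le_one h0] at this

end DoublingInequality

theorem discrim_le_zero_of_forall_rat {a b c : ℝ} (h : ∀ q : ℚ, 0 ≤ a * (q * q) + b * q + c) :
    discrim a b c ≤ 0 :=
  discrim_le_zero fun x =>
    Rat.denseRange_cast.induction_on x (isClosed_le continuous_const (by fun_prop)) h

section PositiveFunctional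

variable {C : Type*} [Ring C] [StarRing C] [Algebra ℂ C] (ω : C →ₗ[ℂ] ℂ)

theorem map_star_add_ratCast_smul_mul_self (x y : C) (q : ℚ) :
    ω (star (x + (q : ℂ) • y) * (x + (q : ℂ) • y)) =
      ω (star x * x) + q * (ω (star x * y) + ω (star y * x)) + q ^ 2 * ω (star y * y) := by
  rw [star_add, star_ratCast_smul, add_mul, mul_add, mul_add]
  simp only [smul_mul_assoc, mul_smul_comm, smul_smul, map_add, map_smul, smul_eq_mul]
  ring

/-- Without `StarModule ℂ C` the form `ω (x⋆ y)` need not be Hermitian and only rational scalars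
commute with `star`: the symmetry hypothesis makes `ω (x⋆ y)` real, and density of `ℚ` in `ℝ`
gives the discriminant bound. -/
theorem norm_sq_le_of_map_star_mul_comm (hpos : ∀ a, 0 ≤ ω (star a * a)) {x y : C}
    (hxy : ω (star y * x) = ω (star x * y)) :
    ‖ω (star x * y)‖ ^ 2 ≤ ‖ω (star x * x)‖ * ‖ω (star y * y)‖ := by
  have hexp (q : ℚ) := map_star_add_ratCast_smul_mul_self ω x y q
  simp only [hxy] at hexp
  have him : (ω (star x * y)).im = 0 := by
    have h := (Complex.le_def.mp (hpos (x + ((1 : ℚ) : ℂ) • y))).2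
    rw [hexp] at h
    simp only [Rat.cast_one, one_mul, one_pow, Complex.add_im, Complex.zero_im,
      ← (Complex.le_def.mp (hpos _)).2, zero_add, add_zero] at h
    linarith
  have hquad (q : ℚ) : 0 ≤ ‖ω (star y * y)‖ * (q * q) + 2 * (ω (star x * y)).re * q
      + ‖ω (star x * x)‖ := by
    have h := (Complex.le_def.mp (hpos (x + (q : ℂ) • y))).1
    rw [hexp] at h
    simp only [← Complex.ofReal_ratCast, ← Complex.ofReal_pow, Complex.add_re,
      Complex.re_ofReal_mul, Complex.zero_re, ← Complex.re_eq_norm.mpr (hpos _)] at h ⊢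
    nlinarith
  have hdisc := discrim_le_zero_of_forall_rat hquad
  rw [discrim] at hdisc
  rw [Complex.sq_norm, Complex.normSq_apply, him]
  nlinarith

variable (γ : C ≃ₐ[ℂ] C) (hγadj : ∀ a, star (γ (star a)) = γ.symm a) (hinv : ∀ a, ω (γ a) = ω a)
include hγadj hinv

theorem map_star_apply_mul (a x : C) : ω (star (γ a) * x) = ω (star a * γ x) := by
  have : star (γ a) = γ.symm (star a) := by simpa using hγadj (star a)
  rw [this, ← hinv, map_mul, AlgEquiv.apply_symm_apply]

theorem map_star_iterate_mul (n : ℕ) (a x : C) :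
    ω (star (γ^[n] a) * x) = ω (star a * γ^[n] x) := by
  induction n generalizing x with
  | zero => rfl
  | succ n ih =>
    rw [Function.iterate_succ_apply', map_star_apply_mul ω γ hγadj hinv, ih,
      ← Function.iterate_succ_apply]

end PositiveFunctional

theorem ground_state_bound_general
    {C : Type*} [Ring C] [StarRing C] [Algebra ℂ C]
    (γ : C ≃ₐ[ℂ] C)
    (hγadj : ∀ a, star (γ (star a)) = γ.symm a)
    (ω : C →ₗ[ℂ] ℂ)
    (hpos : ∀ a, 0 ≤ ω (star a * a))
    (hinv : ∀ a, ω (γ a) = ω a)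
    (hbdd : ∀ a, ∃ K : ℝ, ∀ n : ℕ, ‖ω (star a * (⇑γ)^[n] a)‖ ≤ K) :
    ∀ a, (‖ω (star a * γ a)‖ : ℂ) ≤ ω (star a * a) := by
  intro a
  have hsym (n : ℕ) (x : C) := map_star_iterate_mul ω γ hγadj hinv n a x
  have hCS (n : ℕ) : ‖ω (star a * γ^[n] a)‖ ^ 2
      ≤ ‖ω (star a * γ^[0] a)‖ * ‖ω (star a * γ^[2 * n] a)‖ := by
    have h := norm_sq_le_of_map_star_mul_comm ω hpos (hsym n a)
    rwa [hsym, ← Function.iterate_add_apply, ← two_mul] at h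
  obtain ⟨K, hK⟩ := hbdd a
  have h := le_apply_zero_of_sq_le_mul (fun _ => norm_nonneg _) hCS hK 1
  rw [← Complex.norm_of_nonneg' (hpos a)]
  exact_mod_cast h

/-- Let `γ` be an automorphism of a unital `*`-algebra `C` with `γ* = γ⁻¹`, and `ω` a
`γ`-invariant state on `C` such that for every `a` the sequence `n ↦ ω(a* γⁿ(a))` is
bounded.  Then `|ω(a* γ(a))| ≤ ω(a* a)` for all `a`. -/
theorem ground_state_bound
    {C : Type*} [Ring C] [StarRing C] [Algebra ℂ C]
    (γ : C ≃ₐ[ℂ] C)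
    (hγadj : ∀ a, star (γ (star a)) = γ.symm a)
    (ω : C →ₗ[ℂ] ℂ)
    (hone : ω 1 = 1)
    (hpos : ∀ a, 0 ≤ ω (star a * a))
    (hinv : ∀ a, ω (γ a) = ω a)
    (hbdd : ∀ a, ∃ K : ℝ, ∀ n : ℕ, ‖ω (star a * (⇑γ)^[n] a)‖ ≤ K) :
    ∀ a, (‖ω (star a * γ a)‖ : ℂ) ≤ ω (star a * a) :=
  ground_state_bound_general γ hγadj ω hpos hinv hbdd
end

section
/- Let γ be an automorphism of a unital *-algebra C with γ* = γ⁻¹, and let ω be a γ-invariant state on C satisfying the cluster property: lim_{n→∞} ω(A γⁿ(B)) = ω(A) ω(B) for all A, B ∈ C. If moreover ω(A* γ(A)) ≥ 0 for all A, then ω is a ground state for γ, i.e. 0 ≤ ω(A* γ(A)) ≤ ω(A* A) for all A ∈ C. -/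
open scoped ComplexOrder
open Filter Topology

/-!
The adjoint condition and the invariance of `ω` make `γ` symmetric for the form
`⟨b, c⟩ = ω(b* c)`, i.e. `ω(γ(b)* c) = ω(b* γ(c))`. Hence `xₙ = ω(a* γⁿ(a))` is `ω(b* b)` or
`ω(b* γ(b))` with `b = γᵐ(a)`, so it is nonnegative. Applying the same to `b = a + t γ(a)` shows
that `xₙ + 2t xₙ₊₁ + t² xₙ₊₂ ≥ 0` for rational `t`, so the sequence `xₙ` is log-convex. A
log-convex sequence with `x₁ > x₀` grows geometrically, while the cluster property makes `xₙ`
converge; hence `x₁ ≤ x₀`.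
-/

lemma sq_le_mul_of_forall_rat_nonneg {A B C : ℝ}
    (h : ∀ t : ℚ, 0 ≤ C * (t * t) + 2 * B * t + A) : B ^ 2 ≤ C * A := by
  have hreal : ∀ t : ℝ, 0 ≤ C * (t * t) + 2 * B * t + A :=
    isClosed_property Rat.denseRange_cast (isClosed_le continuous_const (by fun_prop)) h
  have := discrim_le_zero hreal
  rw [discrim] at this
  linarith

section LogConvex

variable {y : ℕ → ℝ}

lemma apply_one_le_apply_zero_of_sq_le_mul (hnn : ∀ n, 0 ≤ y n)
    (hlc : ∀ n, y (n + 1) ^ 2 ≤ y (n + 2) * y n) (hb : BddAbove (Set.range y)) :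
    y 1 ≤ y 0 := by
  by_contra! h
  have h0 : 0 < y 0 := by
    refine (hnn 0).lt_of_ne fun h0 => ?_
    nlinarith [hlc 0, hnn 2]
  set q := y 1 / y 0
  have hq : 1 < q := (one_lt_div h0).mpr h
  have step : ∀ n, 0 < y n ∧ q * y n ≤ y (n + 1) := by
    intro n
    induction n with
    | zero => exact ⟨h0, (div_mul_cancel₀ _ h0.ne').le⟩
    | succ n ih =>
      obtain ⟨hn, hqn⟩ := ih
      have hn1 : 0 < y (n + 1) := (mul_pos (by linarith) hn).trans_le hqn
      refine ⟨hn1, le_of_mul_le_mul_right ?_ hn⟩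
      calc q * y (n + 1) * y n = q * y n * y (n + 1) := by ring
        _ ≤ y (n + 1) ^ 2 := by nlinarith
        _ ≤ y (n + 1 + 1) * y n := hlc n
  have grow : ∀ n, y 0 * q ^ n ≤ y n := by
    intro n
    induction n with
    | zero => simp
    | succ n ih =>
      calc y 0 * q ^ (n + 1) = q * (y 0 * q ^ n) := by ring
        _ ≤ q * y n := by gcongr
        _ ≤ y (n + 1) := (step n).2
  have htop : Tendsto y atTop atTop :=
    tendsto_atTop_mono grow ((tendsto_pow_atTop_atTop_of_one_lt hq).const_mul_atTop h0)
  exact not_bddAbove_of_tendsto_atTop htop hb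

lemma antitone_of_sq_le_mul_of_bddAbove (hnn : ∀ n, 0 ≤ y n)
    (hlc : ∀ n, y (n + 1) ^ 2 ≤ y (n + 2) * y n) (hb : BddAbove (Set.range y)) :
    Antitone y := by
  refine antitone_nat_of_succ_le fun n => ?_
  refine apply_one_le_apply_zero_of_sq_le_mul (y := fun k => y (n + k)) (fun k => hnn _)
    (fun k => hlc (n + k)) (hb.mono (Set.range_comp_subset_range (n + ·) y))

end LogConvex

section SymmetricAutomorphism

variable {C : Type*} [Ring C] [StarRing C] [Algebra ℂ C]
  {γ : C ≃ₐ[ℂ] C} {ω : C →ₗ[ℂ] ℂ}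

lemma map_star_apply_mul_eq (hγadj : ∀ a, star (γ (star a)) = γ.symm a)
    (hinv : ∀ a, ω (γ a) = ω a) (b c : C) :
    ω (star (γ b) * c) = ω (star b * γ c) := by
  have hstar : star (γ b) = γ.symm (star b) := by simpa using hγadj (star b)
  rw [hstar, ← hinv, map_mul, γ.apply_symm_apply]

lemma map_star_iterate_mul_eq (hγadj : ∀ a, star (γ (star a)) = γ.symm a)
    (hinv : ∀ a, ω (γ a) = ω a) (n : ℕ) (b c : C) :
    ω (star ((⇑γ)^[n] b) * c) = ω (star b * (⇑γ)^[n] c) := by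
  induction n generalizing c with
  | zero => rfl
  | succ n ih =>
    rw [Function.iterate_succ_apply', map_star_apply_mul_eq hγadj hinv, ih,
      Function.iterate_succ_apply]

lemma zero_le_map_star_mul_iterate (hγadj : ∀ a, star (γ (star a)) = γ.symm a)
    (hinv : ∀ a, ω (γ a) = ω a) (hpos : ∀ a, 0 ≤ ω (star a * a))
    (hpos' : ∀ a, 0 ≤ ω (star a * γ a)) (a : C) (n : ℕ) :
    0 ≤ ω (star a * (⇑γ)^[n] a) := by
  obtain ⟨m, rfl | rfl⟩ := Nat.even_or_odd' n
  · rw [two_mul, Function.iterate_add_apply, ← map_star_iterate_mul_eq hγadj hinv]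
    exact hpos _
  · rw [show 2 * m + 1 = m + (m + 1) by ring, Function.iterate_add_apply,
      ← map_star_iterate_mul_eq hγadj hinv, Function.iterate_succ_apply']
    exact hpos' _

-- The scalar is rational because, with no `StarModule ℂ C`, `star` need not commute with
-- complex scalars; the density of `ℚ` in `ℝ` recovers the real quadratic form.
lemma map_star_mul_iterate_add_smul (hγadj : ∀ a, star (γ (star a)) = γ.symm a)
    (hinv : ∀ a, ω (γ a) = ω a) (a : C) (t : ℚ) (n : ℕ) :
    ω (star (a + (t : ℂ) • γ a) * (⇑γ)^[n] (a + (t : ℂ) • γ a)) =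
      t ^ 2 * ω (star a * (⇑γ)^[n + 2] a) + 2 * t * ω (star a * (⇑γ)^[n + 1] a) +
        ω (star a * (⇑γ)^[n] a) := by
  rw [← AlgEquiv.coe_pow]
  simp only [star_add, star_ratCast_smul, map_add, map_smul, add_mul, mul_add,
    smul_mul_assoc, mul_smul_comm, smul_eq_mul]
  rw [AlgEquiv.coe_pow, map_star_apply_mul_eq hγadj hinv, map_star_apply_mul_eq hγadj hinv,
    ← Function.iterate_succ_apply, ← Function.iterate_succ_apply' (⇑γ),
    ← Function.iterate_succ_apply' (⇑γ)]
  ring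

lemma re_map_star_mul_iterate_sq_le (hγadj : ∀ a, star (γ (star a)) = γ.symm a)
    (hinv : ∀ a, ω (γ a) = ω a) (hpos : ∀ a, 0 ≤ ω (star a * a))
    (hpos' : ∀ a, 0 ≤ ω (star a * γ a)) (a : C) (n : ℕ) :
    (ω (star a * (⇑γ)^[n + 1] a)).re ^ 2 ≤
      (ω (star a * (⇑γ)^[n + 2] a)).re * (ω (star a * (⇑γ)^[n] a)).re := by
  refine sq_le_mul_of_forall_rat_nonneg fun t => ?_
  have h := zero_le_map_star_mul_iterate hγadj hinv hpos hpos' (a + (t : ℂ) • γ a) n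
  rw [map_star_mul_iterate_add_smul hγadj hinv] at h
  obtain ⟨hre, -⟩ := Complex.nonneg_iff.1 h
  simp only [Complex.add_re, Complex.mul_re, Complex.mul_im, sq, Complex.ratCast_re,
    Complex.ratCast_im, Complex.re_ofNat, Complex.im_ofNat, mul_zero, zero_mul, add_zero,
    sub_zero] at hre
  linarith

end SymmetricAutomorphism

theorem cluster_implies_ground_state_general
    {C : Type*} [Ring C] [StarRing C] [Algebra ℂ C]
    (γ : C ≃ₐ[ℂ] C)
    (hγadj : ∀ a, star (γ (star a)) = γ.symm a)
    (ω : C →ₗ[ℂ] ℂ)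
    (hpos : ∀ a, 0 ≤ ω (star a * a))
    (hinv : ∀ a, ω (γ a) = ω a)
    (hcluster : ∀ a b : C,
      Tendsto (fun n : ℕ => ω (a * (⇑γ)^[n] b)) atTop (nhds (ω a * ω b)))
    (hpos' : ∀ a, 0 ≤ ω (star a * γ a)) :
    ∀ a, 0 ≤ ω (star a * γ a) ∧ ω (star a * γ a) ≤ ω (star a * a) := by
  intro a
  have hnn (n : ℕ) : 0 ≤ ω (star a * (⇑γ)^[n] a) :=
    zero_le_map_star_mul_iterate hγadj hinv hpos hpos' a n
  have hbdd : BddAbove (Set.range fun n => (ω (star a * (⇑γ)^[n] a)).re) :=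
    ((Complex.continuous_re.tendsto _).comp (hcluster (star a) a)).bddAbove_range
  have hanti : Antitone fun n => (ω (star a * (⇑γ)^[n] a)).re :=
    antitone_of_sq_le_mul_of_bddAbove (fun n => (Complex.nonneg_iff.1 (hnn n)).1)
      (re_map_star_mul_iterate_sq_le hγadj hinv hpos hpos' a) hbdd
  refine ⟨hpos' a, Complex.le_def.2 ⟨hanti zero_le_one, ?_⟩⟩
  rw [← (Complex.nonneg_iff.1 (hpos' a)).2, ← (Complex.nonneg_iff.1 (hpos a)).2]

/-- Let `γ` be an automorphism of a unital `*`-algebra with `γ* = γ⁻¹`, and `ω` a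
`γ`-invariant state satisfying the cluster property `ω(a γⁿ(b)) → ω(a)ω(b)`.  If
moreover `ω(a* γ(a)) ≥ 0` for all `a`, then `ω` is a ground state for `γ`:
`0 ≤ ω(a* γ(a)) ≤ ω(a* a)`. -/
theorem cluster_implies_ground_state
    {C : Type*} [Ring C] [StarRing C] [Algebra ℂ C]
    (γ : C ≃ₐ[ℂ] C)
    (hγadj : ∀ a, star (γ (star a)) = γ.symm a)
    (ω : C →ₗ[ℂ] ℂ)
    (hone : ω 1 = 1)
    (hpos : ∀ a, 0 ≤ ω (star a * a))
    (hinv : ∀ a, ω (γ a) = ω a)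
    (hcluster : ∀ a b : C,
      Tendsto (fun n : ℕ => ω (a * (⇑γ)^[n] b)) atTop (nhds (ω a * ω b)))
    (hpos' : ∀ a, 0 ≤ ω (star a * γ a)) :
    ∀ a, 0 ≤ ω (star a * γ a) ∧ ω (star a * γ a) ≤ ω (star a * a) :=
  cluster_implies_ground_state_general γ hγadj ω hpos hinv hcluster hpos'
end

section
/- Let ω be a state on a unital *-algebra A which is invariant under an automorphism α satisfying ω(A* α(A)) ≥ 0 and ω(A* α(A)) ≤ ω(A*A) for all A ∈ A (ground state property), and let (π, H, Ω) be the GNS triple of ω. Then the assignment T π(A)Ω := π(α(A))Ω is well-defined and extends to a bounded positive operator T on H with 0 ≤ T ≤ 1 and T Ω = Ω. -/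
/-!
The form `(a, b) ↦ ω(a* α(b)) = ⟪π a Ω, π (α b) Ω⟫` is positive, hence Hermitian, hence satisfies
Cauchy–Schwarz. At the pair `(α a, a)` this gives
`‖π (α a) Ω‖⁴ ≤ ω((α a)* α² a) ω(a* α a) ≤ ‖π (α a) Ω‖² ‖π a Ω‖²`, so `π a Ω ↦ π (α a) Ω` is a
well-defined contraction on the dense subspace `π(A)Ω` and extends by continuity to `H`;
positivity of `⟪ψ, T ψ⟫` passes to the closure.
-/

open scoped ComplexOrder InnerProductSpace

namespace LinearMap

theorem IsNonneg.isSymm {E : Type*} [AddCommGroup E] [Module ℂ E]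
    {B : E →ₗ⋆[ℂ] E →ₗ[ℂ] ℂ} (hB : B.IsNonneg) : B.IsSymm := by
  have him : ∀ x, (B x x).im = 0 := fun x => ((Complex.nonneg_iff.mp (hB.nonneg x)).2).symm
  have hcross : ∀ x y (t : ℂ), (starRingEnd ℂ t * B y x + t * B x y).im = 0 := by
    intro x y t
    have hexp : B (x + t • y) (x + t • y)
        = B x x + (starRingEnd ℂ t * B y x + t * B x y) + starRingEnd ℂ t * t * B y y := by
      simp only [map_add, map_smul, LinearMap.add_apply, LinearMap.smul_apply, smul_eq_mul,
        map_smulₛₗ]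
      ring
    have := him (x + t • y)
    rw [hexp, Complex.add_im, Complex.add_im, him x, ← Complex.normSq_eq_conj_mul_self,
      Complex.mul_im, Complex.ofReal_im, Complex.ofReal_re, him y] at this
    linarith
  -- polarization with `t = I` and `t = 1`
  refine ⟨fun x y => Complex.ext ?_ ?_⟩
  · have := hcross x y Complex.I
    simp only [Complex.conj_I, Complex.add_im, Complex.mul_im, Complex.neg_re, Complex.neg_im,
      Complex.I_re, Complex.I_im] at this
    simp only [Complex.conj_re]
    linarith
  · have := hcross x y 1
    simp only [map_one, one_mul, Complex.add_im] at this
    simp only [Complex.conj_im]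
    linarith

theorem IsSymm.norm_apply_sq_le {𝕜 E : Type*} [RCLike 𝕜] [AddCommGroup E] [Module 𝕜 E]
    {B : E →ₗ⋆[𝕜] E →ₗ[𝕜] 𝕜} (hB : B.IsSymm) (hB_re : ∀ x, 0 ≤ RCLike.re (B x x)) (x y : E) :
    ‖B x y‖ ^ 2 ≤ RCLike.re (B x x) * RCLike.re (B y y) := by
  let _ : PreInnerProductSpace.Core 𝕜 E :=
    { inner := fun x y => B x y
      conj_inner_symm := fun x y => hB.eq y x
      re_inner_nonneg := hB_re
      add_left := fun x y z => by simp only [map_add, LinearMap.add_apply]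
      smul_left := fun x y r => by simp only [map_smulₛₗ, LinearMap.smul_apply, smul_eq_mul] }
  have hswap : ‖B y x‖ = ‖B x y‖ := by rw [← hB.eq x y, RCLike.norm_conj]
  have hcs : ‖B x y‖ * ‖B y x‖ ≤ RCLike.re (B x x) * RCLike.re (B y y) :=
    InnerProductSpace.Core.inner_mul_inner_self_le (𝕜 := 𝕜) x y
  rwa [hswap, ← sq] at hcs

end LinearMap

theorem norm_map_le_of_inner_nonneg_of_inner_le {E H : Type*} [AddCommGroup E] [Module ℂ E]
    [NormedAddCommGroup H] [InnerProductSpace ℂ H] (L : E →ₗ[ℂ] H) (σ : E →ₗ[ℂ] E)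
    (hpos : ∀ x, 0 ≤ ⟪L x, L (σ x)⟫_ℂ) (hle : ∀ x, ⟪L x, L (σ x)⟫_ℂ ≤ ⟪L x, L x⟫_ℂ) (x : E) :
    ‖L (σ x)‖ ≤ ‖L x‖ := by
  set B : E →ₗ⋆[ℂ] E →ₗ[ℂ] ℂ := ((innerₛₗ ℂ).comp L).compl₂ (L ∘ₗ σ)
  have hB : B.IsNonneg := ⟨hpos⟩
  have hre : ∀ y, (B y y).re ≤ ‖L y‖ ^ 2 := fun y => by
    rw [← inner_self_eq_norm_sq (𝕜 := ℂ)]; exact (Complex.le_def.mp (hle y)).1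
  have hdiag_nonneg : ∀ y, 0 ≤ (B y y).re := fun y => (Complex.nonneg_iff.mp (hB.nonneg y)).1
  have hcs := hB.isSymm.norm_apply_sq_le hdiag_nonneg (σ x) x
  have hdiag : ‖B (σ x) x‖ = ‖L (σ x)‖ ^ 2 :=
    (inner_self_re_eq_norm _).symm.trans (inner_self_eq_norm_sq _)
  have hprod : (‖L (σ x)‖ ^ 2) ^ 2 ≤ ‖L (σ x)‖ ^ 2 * ‖L x‖ ^ 2 :=
    hdiag ▸ hcs |>.trans (mul_le_mul (hre (σ x)) (hre x) (hdiag_nonneg x) (sq_nonneg _))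
  have hsq : ‖L (σ x)‖ ^ 2 ≤ ‖L x‖ ^ 2 := by
    rcases (sq_nonneg ‖L (σ x)‖).eq_or_lt with h0 | h0
    · rw [← h0]; positivity
    · exact le_of_mul_le_mul_left (sq (‖L (σ x)‖ ^ 2) ▸ hprod) h0
  exact (pow_le_pow_iff_left₀ (norm_nonneg _) (norm_nonneg _) two_ne_zero).mp hsq

theorem StarAlgHom.inner_apply_apply_eq_inner_star_mul {A H : Type*} [Ring A] [StarRing A] [Algebra ℂ A]
    [NormedAddCommGroup H] [InnerProductSpace ℂ H] [CompleteSpace H]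
    (π : A →⋆ₐ[ℂ] (H →L[ℂ] H)) (Ω : H) (x y : A) :
    ⟪π x Ω, π y Ω⟫_ℂ = ⟪Ω, π (star x * y) Ω⟫_ℂ := by
  rw [map_mul, map_star, mul_apply_eq_comp, ContinuousLinearMap.star_eq_adjoint,
    ContinuousLinearMap.adjoint_inner_right]

theorem gns_transfer_matrix_exists_general
    {A : Type*} [Ring A] [StarRing A] [Algebra ℂ A]
    {H : Type*} [NormedAddCommGroup H] [InnerProductSpace ℂ H] [CompleteSpace H]
    (π : A →⋆ₐ[ℂ] (H →L[ℂ] H)) (Ω : H)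
    (hcyc : Dense (Set.range fun a : A => π a Ω))
    (ω : A →ₗ[ℂ] ℂ)
    (hω : ∀ a, ω a = (inner ℂ Ω (π a Ω) : ℂ))
    (α : A ≃ₐ[ℂ] A)
    (hgs1 : ∀ a, 0 ≤ ω (star a * α a))
    (hgs2 : ∀ a, ω (star a * α a) ≤ ω (star a * a)) :
    ∃ T : H →L[ℂ] H,
      (∀ a, T (π a Ω) = π (α a) Ω) ∧
      (∀ ψ : H, 0 ≤ (inner ℂ ψ (T ψ) : ℂ)) ∧
      ‖T‖ ≤ 1 ∧
      T Ω = Ω := by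
  set L : A →ₗ[ℂ] H := (ContinuousLinearMap.apply ℂ H Ω).toLinearMap ∘ₗ π.toLinearMap
  have hip : ∀ x y, ⟪L x, L y⟫_ℂ = ω (star x * y) := fun x y => by
    rw [hω]; exact π.inner_apply_apply_eq_inner_star_mul Ω x y
  have hcontr : ∀ a, ‖L (α a)‖ ≤ 1 * ‖L a‖ := fun a => by
    rw [one_mul]
    refine norm_map_le_of_inner_nonneg_of_inner_le L α.toLinearMap (fun x => ?_) (fun x => ?_) a
    · simpa only [hip, AlgEquiv.toLinearMap_apply] using hgs1 x
    · simpa only [hip, AlgEquiv.toLinearMap_apply] using hgs2 x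
  have hdense : DenseRange L := hcyc
  set T := (L ∘ₗ α.toLinearMap).extendOfNorm L
  have hT : ∀ a, T (L a) = L (α a) := LinearMap.extendOfNorm_eq hdense ⟨1, hcontr⟩
  refine ⟨T, hT, fun ψ => ?_, LinearMap.opNorm_extendOfNorm_le hdense zero_le_one hcontr, ?_⟩
  · refine hdense.induction_on ψ
      (isClosed_le continuous_const (continuous_id.inner T.continuous)) fun a => ?_
    rw [hT, hip]
    exact hgs1 a
  · simpa [L] using hT 1

/-- Let `ω` be a state on a unital `*`-algebra `A`, invariant under an automorphism `α`
with the ground state property `0 ≤ ω(a* α(a)) ≤ ω(a* a)`, and let `(π, H, Ω)` be the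
GNS triple of `ω`.  Then `T π(a)Ω := π(α(a))Ω` is well-defined and extends to a bounded
positive operator `T` on `H` with `0 ≤ T ≤ 1` and `T Ω = Ω`. -/
theorem gns_transfer_matrix_exists
    {A : Type*} [Ring A] [StarRing A] [Algebra ℂ A]
    {H : Type*} [NormedAddCommGroup H] [InnerProductSpace ℂ H] [CompleteSpace H]
    (π : A →⋆ₐ[ℂ] (H →L[ℂ] H)) (Ω : H)
    (hcyc : Dense (Set.range fun a : A => π a Ω))
    (ω : A →ₗ[ℂ] ℂ)
    (hω : ∀ a, ω a = (inner ℂ Ω (π a Ω) : ℂ))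
    (hone : ω 1 = 1)
    (α : A ≃ₐ[ℂ] A)
    (hinv : ∀ a, ω (α a) = ω a)
    (hgs1 : ∀ a, 0 ≤ ω (star a * α a))
    (hgs2 : ∀ a, ω (star a * α a) ≤ ω (star a * a)) :
    ∃ T : H →L[ℂ] H,
      (∀ a, T (π a Ω) = π (α a) Ω) ∧
      (∀ ψ : H, 0 ≤ (inner ℂ ψ (T ψ) : ℂ)) ∧
      ‖T‖ ≤ 1 ∧
      T Ω = Ω :=
  gns_transfer_matrix_exists_general π Ω hcyc ω hω α hgs1 hgs2
end

section
/- Let ω be an α-invariant ground state on a unital *-algebra A satisfying the cluster property lim_{n→∞} ω(A αⁿ(B)) = ω(A)ω(B) for all A, B ∈ A. Let T be the associated GNS transfer matrix with T π(A)Ω = π(α(A))Ω and 0 ≤ T ≤ 1. Then the eigenspace of T for the eigenvalue 1 is one-dimensional, spanned by Ω. -/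
/-!
The cluster property says that `Tⁿ` converges weakly to the projection `|Ω⟩⟨Ω|` when tested
against the dense set of vectors `π(a)Ω`. As `‖Tⁿ‖ ≤ 1`, this weak convergence extends to every
test vector. Positivity makes `T` symmetric, so for a fixed vector `ψ` the sequence
`⟪ψ, Tⁿ x⟫ = ⟪Tⁿ ψ, x⟫ = ⟪ψ, x⟫` is constant, whence `⟪ψ, x⟫ = ⟪ψ, Ω⟫ ⟪Ω, x⟫` on a dense set,
i.e. `ψ = ⟪Ω, ψ⟫ Ω`.
-/

open scoped ComplexOrder
open Filter Topology
open scoped InnerProductSpace NNReal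

theorem LinearMap.isSymmetric_of_inner_self_nonneg {E : Type*} [NormedAddCommGroup E]
    [InnerProductSpace ℂ E] {T : E →ₗ[ℂ] E} (hT : ∀ x, 0 ≤ ⟪x, T x⟫_ℂ) : T.IsSymmetric := by
  rw [LinearMap.isSymmetric_iff_inner_map_self_real]
  intro x
  rw [← inner_conj_symm, RCLike.conj_conj]
  exact (IsSelfAdjoint.of_nonneg (hT x)).star_eq.symm

section InnerProductSpace

variable {𝕜 E : Type*} [RCLike 𝕜] [NormedAddCommGroup E] [InnerProductSpace 𝕜 E]

theorem LinearMap.IsSymmetric.inner_iterate_apply_of_apply_eq_self {T : E →ₗ[𝕜] E}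
    (hT : T.IsSymmetric) {ψ : E} (hψ : T ψ = ψ) (n : ℕ) (x : E) :
    ⟪ψ, T^[n] x⟫_𝕜 = ⟪ψ, x⟫_𝕜 := by
  induction n with
  | zero => rfl
  | succ n ih => rw [Function.iterate_succ_apply', ← hT, hψ, ih]

theorem ContinuousLinearMap.norm_iterate_apply_le_of_norm_le_one {T : E →L[𝕜] E} (hT : ‖T‖ ≤ 1)
    (n : ℕ) (x : E) : ‖T^[n] x‖ ≤ ‖x‖ := by
  induction n with
  | zero => rfl
  | succ n ih =>
    rw [Function.iterate_succ_apply']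
    exact (T.le_of_opNorm_le hT _).trans (by rw [one_mul]; exact ih)

theorem lipschitzWith_inner_left {w : E} {C : ℝ≥0} (hw : ‖w‖ ≤ C) :
    LipschitzWith C fun φ : E => ⟪φ, w⟫_𝕜 :=
  LipschitzWith.of_dist_le_mul fun φ φ' => by
    rw [dist_eq_norm, dist_eq_norm, ← inner_sub_left, mul_comm]
    exact (norm_inner_le_norm _ _).trans (by gcongr)

theorem Dense.tendsto_inner_left {ι : Type*} {l : Filter ι} {v : ι → E} {y : E} {C : ℝ≥0}
    (hv : ∀ i, ‖v i‖ ≤ C) {s : Set E} (hs : Dense s)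
    (h : ∀ φ ∈ s, Tendsto (fun i => ⟪φ, v i⟫_𝕜) l (𝓝 ⟪φ, y⟫_𝕜)) (φ : E) :
    Tendsto (fun i => ⟪φ, v i⟫_𝕜) l (𝓝 ⟪φ, y⟫_𝕜) := by
  have hequi : Equicontinuous fun i (φ : E) => ⟪φ, v i⟫_𝕜 :=
    (LipschitzWith.uniformEquicontinuous _ C fun i =>
      lipschitzWith_inner_left (hv i)).equicontinuous
  have hclosed := hequi.isClosed_setOfPred_tendsto (l := l) (f := fun φ => ⟪φ, y⟫_𝕜)
    (continuous_id.inner continuous_const)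
  exact hclosed.closure_subset_iff.mpr h (hs φ)

end InnerProductSpace

section GNS

variable {A : Type*} [Ring A] [StarRing A] [Algebra ℂ A]
  {H : Type*} [NormedAddCommGroup H] [InnerProductSpace ℂ H] [CompleteSpace H]

theorem StarAlgHom.inner_apply_apply (π : A →⋆ₐ[ℂ] (H →L[ℂ] H)) (Ω : H) (b c : A) :
    ⟪π b Ω, π c Ω⟫_ℂ = ⟪Ω, π (star b * c) Ω⟫_ℂ := by
  rw [map_mul, map_star, ContinuousLinearMap.star_eq_adjoint, mul_apply_eq_comp,
    ContinuousLinearMap.adjoint_inner_right]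

theorem tendsto_inner_iterate_of_cluster (π : A →⋆ₐ[ℂ] (H →L[ℂ] H)) (Ω : H) (ω : A →ₗ[ℂ] ℂ)
    (hω : ∀ a, ω a = ⟪Ω, π a Ω⟫_ℂ) (α : A → A)
    (hcluster : ∀ a b : A, Tendsto (fun n : ℕ => ω (a * α^[n] b)) atTop (𝓝 (ω a * ω b)))
    (T : H →L[ℂ] H) (hT : ∀ a, T (π a Ω) = π (α a) Ω) (a b : A) :
    Tendsto (fun n => ⟪π b Ω, T^[n] (π a Ω)⟫_ℂ) atTop (𝓝 ⟪π b Ω, ⟪Ω, π a Ω⟫_ℂ • Ω⟫_ℂ) := by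
  have hsemiconj : Function.Semiconj (fun a => π a Ω) α T := fun a => (hT a).symm
  have hlim : ⟪π b Ω, ⟪Ω, π a Ω⟫_ℂ • Ω⟫_ℂ = ω (star b) * ω a := by
    rw [inner_smul_right, ← hω, mul_comm, hω (star b)]
    congr 1
    simpa using π.inner_apply_apply Ω b 1
  have hiter (n : ℕ) : T^[n] (π a Ω) = π (α^[n] a) Ω := (hsemiconj.iterate_right n a).symm
  simp_rw [hlim, hiter, π.inner_apply_apply, ← hω]
  exact hcluster (star b) a

end GNS

theorem gns_transfer_matrix_vacuum_unique_general
    {A : Type*} [Ring A] [StarRing A] [Algebra ℂ A]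
    {H : Type*} [NormedAddCommGroup H] [InnerProductSpace ℂ H] [CompleteSpace H]
    (π : A →⋆ₐ[ℂ] (H →L[ℂ] H)) (Ω : H)
    (hcyc : Dense (Set.range fun a : A => π a Ω))
    (ω : A →ₗ[ℂ] ℂ)
    (hω : ∀ a, ω a = (inner ℂ Ω (π a Ω) : ℂ))
    (α : A ≃ₐ[ℂ] A)
    (hcluster : ∀ a b : A,
      Tendsto (fun n : ℕ => ω (a * (⇑α)^[n] b)) atTop (nhds (ω a * ω b)))
    (T : H →L[ℂ] H)
    (hT : ∀ a, T (π a Ω) = π (α a) Ω)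
    (hTpos : ∀ ψ : H, 0 ≤ (inner ℂ ψ (T ψ) : ℂ))
    (hTnorm : ‖T‖ ≤ 1) :
    {ψ : H | T ψ = ψ} = {ψ : H | ∃ c : ℂ, ψ = c • Ω} := by
  have hTΩ : T Ω = Ω := by simpa using hT 1
  have hTsymm : (T : H →ₗ[ℂ] H).IsSymmetric := LinearMap.isSymmetric_of_inner_self_nonneg hTpos
  ext ψ
  constructor
  · intro hψ
    refine ⟨⟪Ω, ψ⟫_ℂ, DenseRange.eq_of_inner_left ℂ hcyc fun a => ?_⟩
    have hweak := hcyc.tendsto_inner_left (C := ‖π a Ω‖₊)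
      (fun n => T.norm_iterate_apply_le_of_norm_le_one hTnorm n (π a Ω))
      (by rintro _ ⟨b, rfl⟩; exact tendsto_inner_iterate_of_cluster π Ω ω hω α hcluster T hT a b) ψ
    have hconst : ⟪ψ, π a Ω⟫_ℂ = ⟪ψ, ⟪Ω, π a Ω⟫_ℂ • Ω⟫_ℂ := tendsto_const_nhds_iff.mp <|
      hweak.congr fun n => hTsymm.inner_iterate_apply_of_apply_eq_self hψ n (π a Ω)
    rw [hconst, inner_smul_right, inner_smul_left, inner_conj_symm, mul_comm]
  · rintro ⟨c, rfl⟩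
    rw [Set.mem_ofPred_eq, map_smul, hTΩ]

/-- Let `ω` be an `α`-invariant ground state on a unital `*`-algebra satisfying the
cluster property `ω(a αⁿ(b)) → ω(a)ω(b)`, and let `T` be the GNS transfer matrix with
`T π(a)Ω = π(α(a))Ω` and `0 ≤ T ≤ 1`.  Then the eigenspace of `T` for the eigenvalue `1`
is one-dimensional, spanned by `Ω`. -/
theorem gns_transfer_matrix_vacuum_unique
    {A : Type*} [Ring A] [StarRing A] [Algebra ℂ A]
    {H : Type*} [NormedAddCommGroup H] [InnerProductSpace ℂ H] [CompleteSpace H]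
    (π : A →⋆ₐ[ℂ] (H →L[ℂ] H)) (Ω : H)
    (hcyc : Dense (Set.range fun a : A => π a Ω))
    (ω : A →ₗ[ℂ] ℂ)
    (hω : ∀ a, ω a = (inner ℂ Ω (π a Ω) : ℂ))
    (hone : ω 1 = 1)
    (α : A ≃ₐ[ℂ] A)
    (hinv : ∀ a, ω (α a) = ω a)
    (hgs1 : ∀ a, 0 ≤ ω (star a * α a))
    (hgs2 : ∀ a, ω (star a * α a) ≤ ω (star a * a))
    (hcluster : ∀ a b : A,
      Tendsto (fun n : ℕ => ω (a * (⇑α)^[n] b)) atTop (nhds (ω a * ω b)))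
    (T : H →L[ℂ] H)
    (hT : ∀ a, T (π a Ω) = π (α a) Ω)
    (hTpos : ∀ ψ : H, 0 ≤ (inner ℂ ψ (T ψ) : ℂ))
    (hTnorm : ‖T‖ ≤ 1) :
    {ψ : H | T ψ = ψ} = {ψ : H | ∃ c : ℂ, ψ = c • Ω} :=
  gns_transfer_matrix_vacuum_unique_general π Ω hcyc ω hω α hcluster T hT hTpos hTnorm
end

section
/- Let π be a cyclic representation of a unital *-algebra A on a Hilbert space H with cyclic vector Ω, and suppose T ∈ B(H) is a positive operator with Ad T ∘ π = π ∘ α on the dense domain, whose maximal spectral value ‖T‖ is a simple eigenvalue with eigenvector Ω. Then every bounded operator B commuting with both π(A) and T is a scalar multiple of the identity. -/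
open scoped ComplexOrder

namespace ContinuousLinearMap

variable {R M : Type*} [CommSemiring R] [TopologicalSpace M] [AddCommMonoid M] [Module R M]

theorem apply_eigenvector_of_comp_comm {B T : M →L[R] M} (hBT : B.comp T = T.comp B)
    {μ : R} {x : M} (hx : T x = μ • x) : T (B x) = μ • B x := by
  rw [← comp_apply, ← hBT, comp_apply, hx, map_smul]

theorem eq_smul_one_of_comp_comm_of_dense [T2Space M] [ContinuousConstSMul R M]
    {ι : Type*} (f : ι → M →L[R] M) {v : M} (hv : Dense (Set.range fun i => f i v))
    {B : M →L[R] M} (hB : ∀ i, B.comp (f i) = (f i).comp B) {c : R} (hc : B v = c • v) :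
    B = c • (1 : M →L[R] M) := by
  have hBfun : (B : M → M) = fun x => c • x := by
    refine Continuous.ext_on hv B.continuous (continuous_const_smul c) ?_
    rintro _ ⟨i, rfl⟩
    rw [← comp_apply, hB, comp_apply, hc, map_smul]
  ext x
  exact congrFun hBfun x

end ContinuousLinearMap

theorem commutant_of_dynamics_trivial_general
    {A : Type*} [Ring A] [StarRing A] [Algebra ℂ A]
    {H : Type*} [NormedAddCommGroup H] [InnerProductSpace ℂ H] [CompleteSpace H]
    (π : A →⋆ₐ[ℂ] (H →L[ℂ] H)) (Ω : H)
    (hcyc : Dense (Set.range fun a : A => π a Ω))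
    (T : H →L[ℂ] H)
    (hTΩ : T Ω = (‖T‖ : ℂ) • Ω)
    (hsimple : ∀ ψ : H, T ψ = (‖T‖ : ℂ) • ψ → ∃ c : ℂ, ψ = c • Ω)
    (B : H →L[ℂ] H)
    (hBπ : ∀ a : A, B.comp (π a) = (π a).comp B)
    (hBT : B.comp T = T.comp B) :
    ∃ lam : ℂ, B = lam • (1 : H →L[ℂ] H) := by
  obtain ⟨c, hc⟩ := hsimple (B Ω) (ContinuousLinearMap.apply_eigenvector_of_comp_comm hBT hTΩ)
  exact ⟨c, ContinuousLinearMap.eq_smul_one_of_comp_comm_of_dense (fun a => π a) hcyc hBπ hc⟩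

/-- Let `π` be a cyclic representation of a unital `*`-algebra on a Hilbert space `H`
with cyclic vector `Ω`, and `T` a positive bounded operator implementing an automorphism
`α` on the dense domain, whose maximal spectral value `‖T‖` is a simple eigenvalue with
eigenvector `Ω`.  Then every bounded operator commuting with both `π(A)` and `T` is a
scalar multiple of the identity. -/
theorem commutant_of_dynamics_trivial
    {A : Type*} [Ring A] [StarRing A] [Algebra ℂ A]
    {H : Type*} [NormedAddCommGroup H] [InnerProductSpace ℂ H] [CompleteSpace H]
    (π : A →⋆ₐ[ℂ] (H →L[ℂ] H)) (Ω : H)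
    (hcyc : Dense (Set.range fun a : A => π a Ω))
    (T : H →L[ℂ] H)
    (hTpos : ∀ ψ : H, 0 ≤ (inner ℂ ψ (T ψ) : ℂ))
    (α : A ≃ₐ[ℂ] A)
    (hα : ∀ a b : A, T (π a (π b Ω)) = π (α a) (T (π b Ω)))
    (hTΩ : T Ω = (‖T‖ : ℂ) • Ω)
    (hsimple : ∀ ψ : H, T ψ = (‖T‖ : ℂ) • ψ → ∃ c : ℂ, ψ = c • Ω)
    (B : H →L[ℂ] H)
    (hBπ : ∀ a : A, B.comp (π a) = (π a).comp B)
    (hBT : B.comp T = T.comp B) :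
    ∃ lam : ℂ, B = lam • (1 : H →L[ℂ] H) :=
  commutant_of_dynamics_trivial_general π Ω hcyc T hTΩ hsimple B hBπ hBT
end
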